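/- arXiv:math/9906139 — 2 statements merged into one kernel-verified Lean document; each statement's English description precedes it below -/
import Mathlib

section
/- Every 'direct sum system' with connected non-orthogonality graph is transverse: let V = L₁ ⊕ … ⊕ L_k be an internal direct sum of subspaces of a finite-dimensional real inner product space V. Then for every subset I ⊊ {1,…,k} there exists j₀ ∈ {1,…,k} \ I with P_{E⁺}(L_{j₀}^⊥) = E⁺, where E⁺ = span{Lᵢ : i ∈ I}. -/
/-!
Take any `j₀ ∉ I`. Independence of the `L i` makes `L j₀` and `E⁺` intersect trivially, so in
finite dimension `(L j₀)ᗮ ⊔ (E⁺)ᗮ = (L j₀ ⊓ E⁺)ᗮ = V`. The projection onto `E⁺` kills `(E⁺)ᗮ`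
and is onto `E⁺`, hence it already maps `(L j₀)ᗮ` onto `E⁺`.
-/

namespace Submodule

variable {𝕜 E : Type*} [RCLike 𝕜] [NormedAddCommGroup E] [InnerProductSpace 𝕜 E]

theorem map_orthogonalProjectionOnto_orthogonal (K : Submodule 𝕜 E) [K.HasOrthogonalProjection] :
    Kᗮ.map K.orthogonalProjectionOnto.toLinearMap = ⊥ :=
  eq_bot_iff.2 <| map_le_iff_le_comap.2 <| by
    rw [comap_bot]
    exact ker_orthogonalProjectionOnto.ge

theorem range_orthogonalProjectionOnto (K : Submodule 𝕜 E) [K.HasOrthogonalProjection] :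
    LinearMap.range K.orthogonalProjectionOnto.toLinearMap = ⊤ :=
  LinearMap.range_eq_top_of_surjective _ fun v =>
    ⟨v, orthogonalProjectionOnto_mem_subspace_eq_self v⟩

theorem map_orthogonalProjectionOnto_eq_top_of_sup_orthogonal_eq_top (K W : Submodule 𝕜 E)
    [K.HasOrthogonalProjection] (h : W ⊔ Kᗮ = ⊤) :
    W.map K.orthogonalProjectionOnto.toLinearMap = ⊤ := by
  rw [← bot_sup_eq (W.map _), ← map_orthogonalProjectionOnto_orthogonal, sup_comm, ← map_sup, h,
    map_top, range_orthogonalProjectionOnto]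

theorem orthogonal_sup_orthogonal [FiniteDimensional 𝕜 E] (K₁ K₂ : Submodule 𝕜 E) :
    K₁ᗮ ⊔ K₂ᗮ = (K₁ ⊓ K₂)ᗮ := by
  rw [← orthogonal_orthogonal (K₁ᗮ ⊔ K₂ᗮ), ← inf_orthogonal, orthogonal_orthogonal,
    orthogonal_orthogonal]

end Submodule

/-- Every "direct sum system" is transverse: if `V = L₁ ⊕ … ⊕ L_k` is an internal
(not necessarily orthogonal) direct sum, then for every proper index subset `I` there
is `j₀ ∉ I` such that the orthogonal projection of `(L j₀)ᗮ` onto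
`E⁺ = span {L i : i ∈ I}` is all of `E⁺`. -/
theorem directSum_system_transverse
    {V : Type*} [NormedAddCommGroup V] [InnerProductSpace ℝ V] [FiniteDimensional ℝ V]
    {k : ℕ} (L : Fin k → Submodule ℝ V) (hdirect : DirectSum.IsInternal L) :
    ∀ I : Finset (Fin k), I ≠ Finset.univ →
      ∃ j₀ : Fin k, j₀ ∉ I ∧
        Submodule.map (Submodule.orthogonalProjection (⨆ i ∈ I, L i)).toLinearMap (L j₀)ᗮ = ⊤ := by
  intro I hI
  obtain ⟨j₀, hj₀⟩ : ∃ j₀, j₀ ∉ I := by simpa [Finset.eq_univ_iff_forall] using hI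
  have hdisj : Disjoint (L j₀) (⨆ i ∈ I, L i) :=
    hdirect.submodule_iSupIndep.disjoint_biSup (y := ↑I) hj₀
  have hsup : (L j₀)ᗮ ⊔ (⨆ i ∈ I, L i)ᗮ = ⊤ := by
    rw [Submodule.orthogonal_sup_orthogonal, disjoint_iff.1 hdisj, Submodule.bot_orthogonal_eq_top]
  exact ⟨j₀, hj₀, Submodule.map_orthogonalProjectionOnto_eq_top_of_sup_orthogonal_eq_top _ _ hsup⟩
end

section
/- In the hard ball velocity space 𝓩 = {(v₁,…,v_N) ∈ (ℝ^ν)^N : Σᵢ mᵢvᵢ = 0} with the mass inner product, the span of the base spaces L_{i,j} over the edge set I of a graph G on vertices {1,…,N} equals all of 𝓩 if and only if G is connected. -/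
/-- The velocity space `𝓩 = {v : ∑ mᵢ • vᵢ = 0}` of a hard ball system. -/
noncomputable def massZ (N ν : ℕ) (m : Fin N → ℝ) :
    Submodule ℝ (Fin N → EuclideanSpace ℝ (Fin ν)) :=
  LinearMap.ker (∑ l : Fin N, m l •
    (LinearMap.proj l : (Fin N → EuclideanSpace ℝ (Fin ν)) →ₗ[ℝ] EuclideanSpace ℝ (Fin ν)))

/-- The base space `L_{i,j} = {v : v_k = 0 for k ∉ {i,j}, mᵢ • vᵢ + m_j • v_j = 0}`. -/
noncomputable def baseSpace (N ν : ℕ) (m : Fin N → ℝ) (i j : Fin N) :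
    Submodule ℝ (Fin N → EuclideanSpace ℝ (Fin ν)) :=
  (⨅ k ∈ ({i, j} : Set (Fin N))ᶜ,
      LinearMap.ker (LinearMap.proj (R := ℝ)
        (φ := fun _ : Fin N => EuclideanSpace ℝ (Fin ν)) k)) ⊓
  LinearMap.ker (m i • LinearMap.proj i + m j • LinearMap.proj j :
    (Fin N → EuclideanSpace ℝ (Fin ν)) →ₗ[ℝ] EuclideanSpace ℝ (Fin ν))

/-!
If `G` is connected, every `v ∈ 𝓩` is reached by moving the momentum `mⱼ vⱼ` of each particle to
a fixed particle `i₀` along a path of `G`, and moving momentum across an edge `{i, j}` is a vector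
of `L_{i,j}`. Conversely, each `L_{i,j}` over an edge conserves the total momentum of every
connected component of `G`, whereas `𝓩` contains a transfer of momentum between two components.
-/

section

variable {N ν : ℕ} {m : Fin N → ℝ}

lemma mem_massZ_iff {v : Fin N → EuclideanSpace ℝ (Fin ν)} :
    v ∈ massZ N ν m ↔ ∑ l, m l • v l = 0 := by
  simp [massZ, LinearMap.sum_apply]

lemma mem_baseSpace_iff {i j : Fin N} {v : Fin N → EuclideanSpace ℝ (Fin ν)} :
    v ∈ baseSpace N ν m i j ↔
      (∀ k, k ≠ i → k ≠ j → v k = 0) ∧ m i • v i + m j • v j = 0 := by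
  simp [baseSpace, Submodule.mem_iInf]

lemma sum_smul_eq_of_mem_baseSpace (c : Fin N → ℝ) {i j : Fin N} (hij : i ≠ j)
    {v : Fin N → EuclideanSpace ℝ (Fin ν)} (hv : v ∈ baseSpace N ν m i j) :
    ∑ k, c k • v k = c i • v i + c j • v j :=
  Finset.sum_eq_add i j hij
    (fun k _ hk => by rw [(mem_baseSpace_iff.1 hv).1 k hk.1 hk.2, smul_zero])
    (by simp) (by simp)

lemma baseSpace_le_massZ {i j : Fin N} (hij : i ≠ j) :
    baseSpace N ν m i j ≤ massZ N ν m := fun v hv => by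
  rw [mem_massZ_iff, sum_smul_eq_of_mem_baseSpace m hij hv]
  exact (mem_baseSpace_iff.1 hv).2

variable (N ν m) in
noncomputable def baseSpan (G : SimpleGraph (Fin N)) :
    Submodule ℝ (Fin N → EuclideanSpace ℝ (Fin ν)) :=
  ⨆ p ∈ {p : Fin N × Fin N | G.Adj p.1 p.2}, baseSpace N ν m p.1 p.2

variable {G : SimpleGraph (Fin N)}

lemma baseSpace_le_baseSpan {i j : Fin N} (h : G.Adj i j) :
    baseSpace N ν m i j ≤ baseSpan N ν m G :=
  le_iSup₂ (f := fun p (_ : p ∈ {p : Fin N × Fin N | G.Adj p.1 p.2}) =>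
    baseSpace N ν m p.1 p.2) (i, j) h

lemma baseSpan_le_iff {P : Submodule ℝ (Fin N → EuclideanSpace ℝ (Fin ν))} :
    baseSpan N ν m G ≤ P ↔ ∀ i j, G.Adj i j → baseSpace N ν m i j ≤ P :=
  ⟨fun h _ _ hij => (baseSpace_le_baseSpan hij).trans h,
    fun h => iSup₂_le fun p hp => h p.1 p.2 hp⟩

lemma baseSpan_le_massZ : baseSpan N ν m G ≤ massZ N ν m :=
  baseSpan_le_iff.2 fun _ _ hij => baseSpace_le_massZ hij.ne

/-- `massZ N ν (S.indicator m)` is the set of velocities for which the particles in `S` have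
total momentum zero. -/
lemma baseSpan_le_massZ_indicator (S : Set (Fin N))
    (hS : ∀ i j, G.Adj i j → (i ∈ S ↔ j ∈ S)) :
    baseSpan N ν m G ≤ massZ N ν (S.indicator m) := by
  refine baseSpan_le_iff.2 fun i j hij v hv => ?_
  rw [mem_massZ_iff, sum_smul_eq_of_mem_baseSpace _ hij.ne hv]
  by_cases hi : i ∈ S
  · rw [Set.indicator_of_mem hi, Set.indicator_of_mem ((hS i j hij).1 hi)]
    exact (mem_baseSpace_iff.1 hv).2
  · rw [Set.indicator_of_notMem hi, Set.indicator_of_notMem (mt (hS i j hij).2 hi),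
      zero_smul, zero_smul, add_zero]

/-- The velocity change of particles `i` and `j` when momentum `w` passes from `j` to `i`. -/
noncomputable def momentumTransfer (m : Fin N → ℝ) (i j : Fin N)
    (w : EuclideanSpace ℝ (Fin ν)) : Fin N → EuclideanSpace ℝ (Fin ν) :=
  Pi.single i ((m i)⁻¹ • w) - Pi.single j ((m j)⁻¹ • w)

lemma sum_smul_momentumTransfer (c : Fin N → ℝ) (i j : Fin N) (w : EuclideanSpace ℝ (Fin ν)) :
    ∑ k, c k • momentumTransfer m i j w k = (c i * (m i)⁻¹ - c j * (m j)⁻¹) • w := by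
  simp [momentumTransfer, Pi.single_apply, smul_sub, Finset.sum_sub_distrib, smul_smul,
    sub_smul]

lemma momentumTransfer_self (i : Fin N) (w : EuclideanSpace ℝ (Fin ν)) :
    momentumTransfer m i i w = 0 :=
  sub_self _

lemma momentumTransfer_add (i j k : Fin N) (w : EuclideanSpace ℝ (Fin ν)) :
    momentumTransfer m i j w + momentumTransfer m j k w = momentumTransfer m i k w :=
  sub_add_sub_cancel _ _ _

lemma momentumTransfer_mem_baseSpace (hm : ∀ l, m l ≠ 0) (i j : Fin N)
    (w : EuclideanSpace ℝ (Fin ν)) : momentumTransfer m i j w ∈ baseSpace N ν m i j := by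
  rcases eq_or_ne i j with rfl | hij
  · rw [momentumTransfer_self]
    exact Submodule.zero_mem _
  refine mem_baseSpace_iff.2 ⟨fun k hki hkj => by simp [momentumTransfer, hki, hkj], ?_⟩
  simp [momentumTransfer, hij, hij.symm, smul_smul, hm]

lemma momentumTransfer_mem_baseSpan (hm : ∀ l, m l ≠ 0) {i j : Fin N} (h : G.Reachable i j)
    (w : EuclideanSpace ℝ (Fin ν)) : momentumTransfer m i j w ∈ baseSpan N ν m G := by
  obtain ⟨p⟩ := h
  induction p with
  | nil => simp [momentumTransfer_self]
  | @cons a b c hab _ ih =>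
    rw [← momentumTransfer_add a b c]
    exact add_mem (baseSpace_le_baseSpan hab (momentumTransfer_mem_baseSpace hm a b w)) ih

lemma eq_sum_momentumTransfer (hm : ∀ l, m l ≠ 0) (i₀ : Fin N)
    {v : Fin N → EuclideanSpace ℝ (Fin ν)} (hv : v ∈ massZ N ν m) :
    v = ∑ j, momentumTransfer m j i₀ (m j • v j) := by
  ext1 k
  have hv₀ : ∑ j, m j • v j = 0 := mem_massZ_iff.1 hv
  simp [momentumTransfer, Finset.sum_apply, Pi.single_apply, Finset.sum_sub_distrib,
    ← Finset.smul_sum, hv₀, inv_smul_smul₀ (hm _)]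

lemma baseSpan_eq_massZ_of_connected (hm : ∀ l, m l ≠ 0) (hG : G.Connected) :
    baseSpan N ν m G = massZ N ν m := by
  obtain ⟨i₀⟩ := hG.nonempty
  refine baseSpan_le_massZ.antisymm fun v hv => ?_
  rw [eq_sum_momentumTransfer hm i₀ hv]
  exact Submodule.sum_mem _ fun j _ => momentumTransfer_mem_baseSpan hm (hG j i₀) _

lemma preconnected_of_baseSpan_eq_massZ [NeZero ν] (hm : ∀ l, m l ≠ 0)
    (h : baseSpan N ν m G = massZ N ν m) : G.Preconnected := by
  intro i j
  by_contra hij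
  have hne : i ≠ j := by
    rintro rfl
    exact hij .rfl
  obtain ⟨w, hw⟩ := exists_ne (0 : EuclideanSpace ℝ (Fin ν))
  have hmem : momentumTransfer m i j w ∈ baseSpan N ν m G :=
    h ▸ baseSpace_le_massZ hne (momentumTransfer_mem_baseSpace hm i j w)
  have hcomponent := baseSpan_le_massZ_indicator {k | G.Reachable i k}
    (fun _ _ hadj => ⟨fun h => h.trans hadj.reachable, fun h => h.trans hadj.symm.reachable⟩)
    hmem
  rw [mem_massZ_iff, sum_smul_momentumTransfer,
    Set.indicator_of_mem (show i ∈ {k | G.Reachable i k} from .rfl),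
    Set.indicator_of_notMem (show j ∉ {k | G.Reachable i k} from hij),
    mul_inv_cancel₀ (hm i), zero_mul, sub_zero, one_smul] at hcomponent
  exact hw hcomponent

end

/-- The base spaces `L_{i,j}` over the edge set of a graph `G` span the whole velocity
space `𝓩` if and only if `G` is connected. -/
theorem span_baseSpaces_eq_massZ_iff_connected
    {N ν : ℕ} (hN : 2 ≤ N) (hν : 2 ≤ ν) (m : Fin N → ℝ) (hm : ∀ l, 0 < m l)
    (G : SimpleGraph (Fin N)) :
    (⨆ p ∈ {p : Fin N × Fin N | G.Adj p.1 p.2}, baseSpace N ν m p.1 p.2)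
        = massZ N ν m ↔ G.Connected := by
  have hm₀ : ∀ l, m l ≠ 0 := fun l => (hm l).ne'
  have : NeZero ν := ⟨by omega⟩
  refine ⟨fun h => ?_, baseSpan_eq_massZ_of_connected hm₀⟩
  exact G.connected_iff.2 ⟨preconnected_of_baseSpan_eq_massZ hm₀ h, ⟨⟨0, by omega⟩⟩⟩
end
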